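/- arXiv:2103.08352 — 4 statements merged into one kernel-verified Lean document; each statement's English description precedes it below -/
import Mathlib

section
/- Let q₀ ∈ (0,1), p₀ > 0, s ∈ (1/2, 3/2), and set u₀(x) = p₀(e^{-|x+q₀|} − e^{-|x−q₀|}). There exists a constant C = C_s > 0, depending only on s, such that C^{-1} p₀ q₀^{3/2−s} ≤ ‖u₀‖_{H^s} ≤ C p₀ q₀^{3/2−s}. -/
open MeasureTheory Real Set

/-- The Fourier transform `f̂(ξ) = ∫ e^{-ixξ} f(x) dx`. -/
noncomputable def fourierTransform (f : ℝ → ℝ) (ξ : ℝ) : ℂ :=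
  ∫ x : ℝ, Complex.exp (-(Complex.I * x * ξ)) * (f x : ℂ)

/-- The squared Sobolev norm `‖f‖_{H^s}² = ∫ (1+ξ²)^s |f̂(ξ)|² dξ`. -/
noncomputable def sobolevNormSq (s : ℝ) (f : ℝ → ℝ) : ℝ :=
  ∫ ξ : ℝ, (1 + ξ ^ 2) ^ s * ‖fourierTransform f ξ‖ ^ 2

/-- The Sobolev norm `‖f‖_{H^s}`. -/
noncomputable def sobolevNorm (s : ℝ) (f : ℝ → ℝ) : ℝ :=
  Real.sqrt (sobolevNormSq s f)

/-!
Since `e^{-|x|}` has Fourier transform `2 / (1 + ξ²)`, the transform of `u₀` is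
`2 i p₀ sin(q₀ ξ) · 2 / (1 + ξ²)`, so `‖u₀‖²_{H^s} = 16 p₀² ∫ (1 + ξ²)^{s-2} sin²(q₀ ξ) dξ`.
The substitution `t = q₀ ξ` turns this into `32 p₀² q₀^{3-2s} K(q₀²)` with
`K(c) = ∫₀^∞ (c + t²)^{s-2} sin² t dt`. As `K` is antitone in `c ≥ 0`, for `q₀² ≤ 1` we get
`0 < K(1) ≤ K(q₀²) ≤ K(0)`, and `K(0)` is finite precisely because `1/2 < s < 3/2`: its integrand
is at most `t^{2s-2}` near `0` and `t^{2s-4}` near `∞`.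
-/

lemma integrable_exp_neg_abs : Integrable fun x : ℝ => exp (-|x|) := by
  rw [← integrableOn_univ, ← Iic_union_Ioi (a := (0 : ℝ))]
  refine IntegrableOn.union ?_ ?_
  · refine (integrableOn_exp_mul_Iic one_pos 0).congr_fun (fun x hx => ?_) measurableSet_Iic
    simp [abs_of_nonpos (mem_Iic.mp hx)]
  · refine (integrableOn_exp_mul_Ioi neg_one_lt_zero 0).congr_fun (fun x hx => ?_) measurableSet_Ioi
    simp [abs_of_pos (mem_Ioi.mp hx)]

lemma integrable_fourierIntegrand {f : ℝ → ℝ} (hf : Integrable f) (ξ : ℝ) :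
    Integrable fun x : ℝ => Complex.exp (-(Complex.I * x * ξ)) * (f x : ℂ) :=
  hf.ofReal.bdd_mul (c := 1) (by fun_prop) (ae_of_all _ fun x => by simp [Complex.norm_exp])

lemma fourierTransform_const_mul (c : ℝ) (f : ℝ → ℝ) (ξ : ℝ) :
    fourierTransform (fun x => c * f x) ξ = c * fourierTransform f ξ := by
  simp only [fourierTransform, Complex.ofReal_mul, mul_left_comm _ (c : ℂ), integral_const_mul]

lemma fourierTransform_sub {f g : ℝ → ℝ} (hf : Integrable f) (hg : Integrable g) (ξ : ℝ) :
    fourierTransform (fun x => f x - g x) ξ = fourierTransform f ξ - fourierTransform g ξ := by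
  simp only [fourierTransform, Complex.ofReal_sub, mul_sub]
  exact integral_sub (integrable_fourierIntegrand hf ξ) (integrable_fourierIntegrand hg ξ)

lemma fourierTransform_comp_sub_right (f : ℝ → ℝ) (a ξ : ℝ) :
    fourierTransform (fun x => f (x - a)) ξ =
      Complex.exp (-(Complex.I * a * ξ)) * fourierTransform f ξ := by
  rw [fourierTransform, ← integral_add_right_eq_self _ a, fourierTransform, ← integral_const_mul]
  congr 1 with x
  rw [add_sub_cancel_right, ← mul_assoc, ← Complex.exp_add]
  push_cast
  ring_nf

lemma fourierTransform_exp_neg_abs (ξ : ℝ) :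
    fourierTransform (fun x => exp (-|x|)) ξ = 2 / (1 + ξ ^ 2) := by
  have hint := integrable_fourierIntegrand integrable_exp_neg_abs ξ
  have hleft : ∫ x in Iic (0 : ℝ), Complex.exp (-(Complex.I * x * ξ)) * (exp (-|x|) : ℂ) =
      1 / (1 - ξ * Complex.I) := by
    rw [setIntegral_congr_fun measurableSet_Iic
      (g := fun x : ℝ => Complex.exp ((1 - ξ * Complex.I) * x)) ?_,
      integral_exp_mul_complex_Iic (by simp) 0]
    · simp
    · intro x hx
      simp only [abs_of_nonpos (mem_Iic.mp hx), neg_neg, Complex.ofReal_exp, ← Complex.exp_add]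
      ring_nf
  have hright : ∫ x in Ioi (0 : ℝ), Complex.exp (-(Complex.I * x * ξ)) * (exp (-|x|) : ℂ) =
      1 / (1 + ξ * Complex.I) := by
    rw [setIntegral_congr_fun measurableSet_Ioi
      (g := fun x : ℝ => Complex.exp (-(1 + ξ * Complex.I) * x)) ?_,
      integral_exp_mul_complex_Ioi (by simp) 0]
    · rw [Complex.ofReal_zero, mul_zero, Complex.exp_zero, neg_div_neg_eq]
    · intro x hx
      simp only [abs_of_pos (mem_Ioi.mp hx), Complex.ofReal_exp, ← Complex.exp_add]
      push_cast
      ring_nf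
  have hminus : (1 : ℂ) - ξ * Complex.I ≠ 0 := fun h => by simpa using congrArg Complex.re h
  have hplus : (1 : ℂ) + ξ * Complex.I ≠ 0 := fun h => by simpa using congrArg Complex.re h
  rw [fourierTransform, ← intervalIntegral.integral_Iic_add_Ioi hint.integrableOn hint.integrableOn,
    hleft, hright, div_add_div _ _ hminus hplus]
  congr 1
  · ring
  · ring_nf
    rw [Complex.I_sq]
    ring

lemma norm_fourierTransform_u0 (p q ξ : ℝ) :
    ‖fourierTransform (fun x => p * (exp (-|x + q|) - exp (-|x - q|))) ξ‖ =
      4 * |p| * |sin (q * ξ)| / (1 + ξ ^ 2) := by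
  have hshift (a : ℝ) : fourierTransform (fun x => exp (-|x - a|)) ξ =
      Complex.exp (-(Complex.I * a * ξ)) * (2 / (1 + ξ ^ 2)) := by
    rw [fourierTransform_comp_sub_right (fun x => exp (-|x|)), fourierTransform_exp_neg_abs]
  have hint (a : ℝ) : Integrable fun x => exp (-|x - a|) :=
    integrable_exp_neg_abs.comp_sub_right a
  have hdiff : Complex.exp (Complex.I * q * ξ) - Complex.exp (-(Complex.I * q * ξ)) =
      2 * Complex.I * (sin (q * ξ) : ℂ) := by
    rw [Complex.ofReal_sin, Complex.sin]
    push_cast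
    ring_nf
    rw [Complex.I_sq]
    ring_nf
  have hplus : fourierTransform (fun x => exp (-|x + q|)) ξ =
      Complex.exp (Complex.I * q * ξ) * (2 / (1 + ξ ^ 2)) := by
    simpa using hshift (-q)
  rw [fourierTransform_const_mul, fourierTransform_sub (by simpa using hint (-q)) (hint q), hplus,
    hshift, ← sub_mul, hdiff]
  have hden : (0 : ℝ) < 1 + ξ ^ 2 := by positivity
  rw [show (1 : ℂ) + ξ ^ 2 = ((1 + ξ ^ 2 : ℝ) : ℂ) by push_cast; ring]
  simp only [norm_mul, norm_div, Complex.norm_real, Real.norm_eq_abs, abs_of_pos hden,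
    Complex.norm_I, Complex.norm_ofNat]
  ring

lemma sobolevNormSq_u0 (s p q : ℝ) :
    sobolevNormSq s (fun x => p * (exp (-|x + q|) - exp (-|x - q|))) =
      16 * p ^ 2 * ∫ ξ, (1 + ξ ^ 2) ^ (s - 2) * sin (q * ξ) ^ 2 := by
  rw [sobolevNormSq, ← integral_const_mul]
  congr 1 with ξ
  have hden : (0 : ℝ) < 1 + ξ ^ 2 := by positivity
  rw [norm_fourierTransform_u0, rpow_sub hden, rpow_two, div_pow, mul_pow, mul_pow, sq_abs, sq_abs]
  field_simp
  ring

noncomputable def sinSqIntegral (s c : ℝ) : ℝ :=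
  ∫ t in Ioi 0, (c + t ^ 2) ^ (s - 2) * sin t ^ 2

lemma integral_one_add_sq_rpow_mul_sin_sq (s : ℝ) {q : ℝ} (hq : 0 < q) :
    ∫ ξ, (1 + ξ ^ 2) ^ (s - 2) * sin (q * ξ) ^ 2 =
      2 * q ^ (3 - 2 * s) * sinSqIntegral s (q ^ 2) := by
  have heven : ∫ ξ, (1 + ξ ^ 2) ^ (s - 2) * sin (q * ξ) ^ 2 =
      ∫ ξ, (1 + |ξ| ^ 2) ^ (s - 2) * sin (q * |ξ|) ^ 2 := by
    congr 1 with ξ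
    rcases abs_choice ξ with h | h <;> simp [h]
  have hscale (t : ℝ) :
      (1 + (t / q) ^ 2) ^ (s - 2) = (q ^ 2 + t ^ 2) ^ (s - 2) / q ^ (2 * s - 4) := by
    rw [show 1 + (t / q) ^ 2 = (q ^ 2 + t ^ 2) / q ^ 2 by field_simp,
      div_rpow (by positivity) (by positivity), ← rpow_natCast, ← rpow_mul hq.le]
    norm_num
    ring_nf
  rw [heven, integral_comp_abs (f := fun ξ => (1 + ξ ^ 2) ^ (s - 2) * sin (q * ξ) ^ 2)]
  have := integral_comp_mul_left_Ioi (fun t => (1 + (t / q) ^ 2) ^ (s - 2) * sin t ^ 2) 0 hq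
  simp only [mul_div_cancel_left₀ _ hq.ne', mul_zero, hscale, div_mul_eq_mul_div,
    integral_div] at this
  rw [this, sinSqIntegral, show 3 - 2 * s = -1 - (2 * s - 4) by ring, rpow_sub hq (-1),
    rpow_neg_one, smul_eq_mul]
  ring

lemma integrableOn_rpow_mul_sin_sq {s : ℝ} (hs₁ : 1 / 2 < s) (hs₂ : s < 3 / 2) :
    IntegrableOn (fun t => t ^ (2 * s - 4) * sin t ^ 2) (Ioi 0) := by
  rw [← Ioc_union_Ioi_eq_Ioi zero_le_one]
  refine IntegrableOn.union ?_ ?_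
  · refine (intervalIntegral.intervalIntegrable_rpow' (a := 0) (b := 1) (r := 2 * s - 2)
      (by linarith)).1.mono' (by fun_prop) (ae_restrict_of_forall_mem measurableSet_Ioc
      fun t ht => ?_)
    have ht₀ : 0 < t := ht.1
    rw [norm_of_nonneg (by positivity), show 2 * s - 2 = 2 * s - 4 + 2 by ring,
      rpow_add ht₀, rpow_two]
    exact mul_le_mul_of_nonneg_left sin_sq_le_sq (by positivity)
  · refine (integrableOn_Ioi_rpow_of_lt (a := 2 * s - 4) (by linarith) one_pos).mono' (by fun_prop)
      (ae_restrict_of_forall_mem measurableSet_Ioi fun t ht => ?_)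
    have ht₀ : 0 < t := one_pos.trans ht
    rw [norm_of_nonneg (by positivity)]
    exact mul_le_of_le_one_right (by positivity) (sin_sq_le_one t)

lemma add_sq_rpow_le_rpow {s c t : ℝ} (hs : s ≤ 2) (hc : 0 ≤ c) (ht : 0 < t) :
    (c + t ^ 2) ^ (s - 2) ≤ t ^ (2 * s - 4) := by
  calc (c + t ^ 2) ^ (s - 2) ≤ (t ^ 2) ^ (s - 2) :=
        rpow_le_rpow_of_nonpos (by positivity) (by linarith) (by linarith)
    _ = t ^ (2 * s - 4) := by
        rw [← rpow_natCast, ← rpow_mul ht.le]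
        ring_nf

lemma integrableOn_add_sq_rpow_mul_sin_sq {s c : ℝ} (hs₁ : 1 / 2 < s) (hs₂ : s < 3 / 2)
    (hc : 0 ≤ c) : IntegrableOn (fun t => (c + t ^ 2) ^ (s - 2) * sin t ^ 2) (Ioi 0) :=
  (integrableOn_rpow_mul_sin_sq hs₁ hs₂).mono' (by fun_prop)
    (ae_restrict_of_forall_mem measurableSet_Ioi fun t ht => by
      rw [norm_of_nonneg (mul_nonneg (rpow_nonneg (by positivity) _) (sq_nonneg _))]
      exact mul_le_mul_of_nonneg_right (add_sq_rpow_le_rpow (by linarith) hc ht) (sq_nonneg _))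

lemma sinSqIntegral_le {s c : ℝ} (hs₁ : 1 / 2 < s) (hs₂ : s < 3 / 2) (hc : 0 ≤ c) :
    sinSqIntegral s c ≤ ∫ t in Ioi 0, t ^ (2 * s - 4) * sin t ^ 2 :=
  setIntegral_mono_on (integrableOn_add_sq_rpow_mul_sin_sq hs₁ hs₂ hc)
    (integrableOn_rpow_mul_sin_sq hs₁ hs₂) measurableSet_Ioi fun _ ht =>
    mul_le_mul_of_nonneg_right (add_sq_rpow_le_rpow (by linarith) hc ht) (sq_nonneg _)

lemma sinSqIntegral_anti {s c c' : ℝ} (hs₁ : 1 / 2 < s) (hs₂ : s < 3 / 2) (hc : 0 ≤ c)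
    (hcc' : c ≤ c') : sinSqIntegral s c' ≤ sinSqIntegral s c :=
  setIntegral_mono_on (integrableOn_add_sq_rpow_mul_sin_sq hs₁ hs₂ (hc.trans hcc'))
    (integrableOn_add_sq_rpow_mul_sin_sq hs₁ hs₂ hc) measurableSet_Ioi fun t ht =>
    mul_le_mul_of_nonneg_right
      (rpow_le_rpow_of_nonpos (by positivity [mem_Ioi.mp ht]) (by linarith) (by linarith))
      (sq_nonneg _)

lemma sinSqIntegral_pos {s c : ℝ} (hs₁ : 1 / 2 < s) (hs₂ : s < 3 / 2) (hc : 0 ≤ c) :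
    0 < sinSqIntegral s c := by
  have hnonneg (t : ℝ) : 0 ≤ (c + t ^ 2) ^ (s - 2) * sin t ^ 2 :=
    mul_nonneg (rpow_nonneg (by positivity) _) (sq_nonneg _)
  rw [sinSqIntegral, setIntegral_pos_iff_support_of_nonneg_ae (ae_of_all _ hnonneg)
    (integrableOn_add_sq_rpow_mul_sin_sq hs₁ hs₂ hc)]
  have hsupp : Ioo 0 π ⊆ Function.support (fun t => (c + t ^ 2) ^ (s - 2) * sin t ^ 2) ∩ Ioi 0 :=
    fun t ht => ⟨(mul_pos (rpow_pos_of_pos (by positivity [ht.1]) _)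
      (pow_pos (sin_pos_of_pos_of_lt_pi ht.1 ht.2) 2)).ne', ht.1⟩
  exact (by simp [pi_pos] : 0 < volume (Ioo 0 π)).trans_le (measure_mono hsupp)

lemma sobolevNorm_u0 (s : ℝ) {p q : ℝ} (hp : 0 ≤ p) (hq : 0 < q) :
    sobolevNorm s (fun x => p * (exp (-|x + q|) - exp (-|x - q|))) =
      p * q ^ (3 / 2 - s) * √(32 * sinSqIntegral s (q ^ 2)) := by
  have hsq : (q ^ (3 / 2 - s)) ^ 2 = q ^ (3 - 2 * s) := by
    rw [← rpow_natCast, ← rpow_mul hq.le]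
    ring_nf
  rw [sobolevNorm, sobolevNormSq_u0, integral_one_add_sq_rpow_mul_sin_sq s hq,
    show 16 * p ^ 2 * (2 * q ^ (3 - 2 * s) * sinSqIntegral s (q ^ 2)) =
      (p * q ^ (3 / 2 - s)) ^ 2 * (32 * sinSqIntegral s (q ^ 2)) by rw [mul_pow, hsq]; ring,
    sqrt_mul (sq_nonneg _), sqrt_sq (by positivity)]

/-- For `s ∈ (1/2, 3/2)` there is a constant `C = C_s > 0` depending only on `s` such that
for every `p₀ > 0` and `q₀ ∈ (0,1)`, the function
`u₀(x) = p₀ (e^{-|x+q₀|} - e^{-|x-q₀|})` satisfies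
`C⁻¹ p₀ q₀^{3/2-s} ≤ ‖u₀‖_{H^s} ≤ C p₀ q₀^{3/2-s}`. -/
theorem sobolev_norm_u0_two_sided (s : ℝ) (hs : s ∈ Ioo (1 / 2 : ℝ) (3 / 2)) :
    ∃ C : ℝ, 0 < C ∧
      ∀ p₀ q₀ : ℝ, 0 < p₀ → q₀ ∈ Ioo (0 : ℝ) 1 →
        C⁻¹ * (p₀ * q₀ ^ (3 / 2 - s)) ≤
            sobolevNorm s (fun x => p₀ * (Real.exp (-|x + q₀|) - Real.exp (-|x - q₀|))) ∧
          sobolevNorm s (fun x => p₀ * (Real.exp (-|x + q₀|) - Real.exp (-|x - q₀|))) ≤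
            C * (p₀ * q₀ ^ (3 / 2 - s)) := by
  obtain ⟨hs₁, hs₂⟩ := hs
  set A := √(32 * sinSqIntegral s 1)
  set B := √(32 * ∫ t in Ioi 0, t ^ (2 * s - 4) * sin t ^ 2)
  have hA : 0 < A := sqrt_pos.2 (by linarith [sinSqIntegral_pos hs₁ hs₂ zero_le_one])
  refine ⟨max B A⁻¹, lt_max_of_lt_right (inv_pos.2 hA), fun p₀ q₀ hp₀ ⟨hq₀, hq₁⟩ => ?_⟩
  have hq₀_sq : q₀ ^ 2 ≤ 1 := by nlinarith
  have hlower : A ≤ √(32 * sinSqIntegral s (q₀ ^ 2)) :=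
    sqrt_le_sqrt (by linarith [sinSqIntegral_anti hs₁ hs₂ (sq_nonneg q₀) hq₀_sq])
  have hupper : √(32 * sinSqIntegral s (q₀ ^ 2)) ≤ B :=
    sqrt_le_sqrt (by linarith [sinSqIntegral_le hs₁ hs₂ (sq_nonneg q₀)])
  rw [sobolevNorm_u0 s hp₀.le hq₀]
  constructor
  · calc (max B A⁻¹)⁻¹ * (p₀ * q₀ ^ (3 / 2 - s)) ≤ A * (p₀ * q₀ ^ (3 / 2 - s)) := by
          gcongr
          exact inv_le_of_inv_le₀ hA (le_max_right _ _)
      _ ≤ _ := by rw [mul_comm]; gcongr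
  · calc p₀ * q₀ ^ (3 / 2 - s) * √(32 * sinSqIntegral s (q₀ ^ 2))
        ≤ B * (p₀ * q₀ ^ (3 / 2 - s)) := by rw [mul_comm]; gcongr
      _ ≤ _ := by gcongr; exact le_max_left _ _
end

section
/- Let q₀ ∈ (0,1) and s ∈ (1/2, 3/2). Then ∫_0^∞ (1+ξ²)^{s−2} sin²(q₀ξ) dξ ≥ (π/2)(1+π²)^{-3/2} q₀^{3−2s}. -/
open MeasureTheory Real Set

/-!
On `(0, π/q₀]` we have `1 + ξ² ≤ (1 + π²)/q₀²` because `q₀ < 1`, so the weight `(1 + ξ²)^(s-2)`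
is at least `((1 + π²)/q₀²)^(s-2)` there, while `∫₀^{π/q₀} sin²(q₀ξ) dξ = π/(2q₀)`. This gives the
bound with `(1 + π²)^(s-2)` in place of `(1 + π²)^(-3/2)`, which is larger since `s > 1/2`.
-/

theorem integrable_one_add_sq_rpow_mul_sin_sq {p : ℝ} (hp : p < -1 / 2) (c : ℝ) :
    Integrable fun ξ : ℝ => (1 + ξ ^ 2) ^ p * sin (c * ξ) ^ 2 := by
  have h : Integrable fun ξ : ℝ => (1 + ‖ξ‖ ^ 2) ^ (-(-2 * p) / 2) :=
    integrable_rpow_neg_one_add_norm_sq (by simp; linarith)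
  simp only [norm_eq_abs, sq_abs, neg_mul, neg_neg, mul_div_cancel_left₀ p two_ne_zero] at h
  refine h.mul_bdd (c := 1) (by fun_prop) (ae_of_all _ fun ξ => ?_)
  simpa using sin_sq_le_one (c * ξ)

theorem one_add_sq_le_div_sq {a q ξ : ℝ} (hq : q ∈ Ioc 0 1) (hξ : ξ ∈ Icc 0 (a / q)) :
    1 + ξ ^ 2 ≤ (1 + a ^ 2) / q ^ 2 := by
  obtain ⟨hq0, hq1⟩ := hq
  obtain ⟨hξ0, hξa⟩ := hξ
  rw [le_div_iff₀ (by positivity), add_mul, ← mul_pow]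
  have h1 : q ^ 2 ≤ 1 := pow_le_one₀ hq0.le hq1
  have h2 : (ξ * q) ^ 2 ≤ a ^ 2 := pow_le_pow_left₀ (by positivity) ((le_div_iff₀ hq0).1 hξa) 2
  linarith

theorem div_sq_rpow_mul_inv {b q : ℝ} (hb : 0 ≤ b) (hq : 0 < q) (s : ℝ) :
    (b / q ^ 2) ^ (s - 2) * q⁻¹ = b ^ (s - 2) * q ^ (3 - 2 * s) := by
  rw [div_rpow hb (by positivity), ← rpow_natCast, ← rpow_mul hq.le, div_mul_eq_mul_div,
    mul_div_assoc, ← rpow_neg_one, ← rpow_sub hq]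
  congr 2
  push_cast
  ring

theorem integral_Ioc_sin_mul_sq {q : ℝ} (hq : 0 < q) :
    ∫ ξ in Ioc 0 (π / q), sin (q * ξ) ^ 2 = π / (2 * q) := by
  rw [← intervalIntegral.integral_of_le (by positivity),
    intervalIntegral.integral_comp_mul_left (fun x => sin x ^ 2) hq.ne', mul_zero,
    mul_div_cancel₀ π hq.ne', integral_sin_sq]
  simp only [sin_zero, cos_zero, sin_pi, cos_pi, mul_one, mul_neg, neg_zero, sub_self, zero_add,
    sub_zero, smul_eq_mul]
  field_simp

/-- For `q₀ ∈ (0,1)` and `s ∈ (1/2, 3/2)`,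
`∫_0^∞ (1+ξ²)^{s-2} sin²(q₀ξ) dξ ≥ (π/2)(1+π²)^{-3/2} q₀^{3-2s}`. -/
theorem integral_lower_bound (q₀ s : ℝ) (hq₀ : q₀ ∈ Ioo (0 : ℝ) 1)
    (hs : s ∈ Ioo (1 / 2 : ℝ) (3 / 2)) :
    (π / 2) * (1 + π ^ 2) ^ (-(3 / 2) : ℝ) * q₀ ^ (3 - 2 * s) ≤
      ∫ ξ in Ioi (0 : ℝ), (1 + ξ ^ 2) ^ (s - 2) * Real.sin (q₀ * ξ) ^ 2 := by
  obtain ⟨hq0, hq1⟩ := hq₀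
  obtain ⟨hs1, hs2⟩ := hs
  set c := ((1 + π ^ 2) / q₀ ^ 2) ^ (s - 2)
  have hint := integrable_one_add_sq_rpow_mul_sin_sq (p := s - 2) (by linarith) q₀
  have hweight : ∀ ξ ∈ Ioc 0 (π / q₀),
      c * sin (q₀ * ξ) ^ 2 ≤ (1 + ξ ^ 2) ^ (s - 2) * sin (q₀ * ξ) ^ 2 := fun ξ hξ =>
    mul_le_mul_of_nonneg_right (rpow_le_rpow_of_nonpos (by positivity)
      (one_add_sq_le_div_sq ⟨hq0, hq1.le⟩ (Ioc_subset_Icc_self hξ)) (by linarith)) (sq_nonneg _)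
  calc (π / 2) * (1 + π ^ 2) ^ (-(3 / 2) : ℝ) * q₀ ^ (3 - 2 * s)
      ≤ (π / 2) * (1 + π ^ 2) ^ (s - 2) * q₀ ^ (3 - 2 * s) := by
        gcongr
        · exact le_add_of_nonneg_right (sq_nonneg π)
        · linarith
    _ = c * ∫ ξ in Ioc 0 (π / q₀), sin (q₀ * ξ) ^ 2 := by
        rw [integral_Ioc_sin_mul_sq hq0, mul_assoc, ← div_sq_rpow_mul_inv (by positivity) hq0]
        ring
    _ = ∫ ξ in Ioc 0 (π / q₀), c * sin (q₀ * ξ) ^ 2 := (integral_const_mul c _).symm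
    _ ≤ ∫ ξ in Ioc 0 (π / q₀), (1 + ξ ^ 2) ^ (s - 2) * sin (q₀ * ξ) ^ 2 :=
        setIntegral_mono_on (Continuous.integrableOn_Ioc (by fun_prop)) hint.integrableOn
          measurableSet_Ioc hweight
    _ ≤ ∫ ξ in Ioi 0, (1 + ξ ^ 2) ^ (s - 2) * sin (q₀ * ξ) ^ 2 :=
        setIntegral_mono_set hint.integrableOn (ae_of_all _ fun ξ => by positivity)
          Ioc_subset_Ioi_self.eventuallyLE
end

section
/- Let q₀ ∈ (0,1) and s ∈ (1/2, 3/2). Then ∫_0^∞ (1+ξ²)^{s−2} sin²(q₀ξ) dξ ≤ (1/(2s−1) + 1/(3−2s)) q₀^{3−2s}. More precisely, ∫_0^{1/q₀} (1+ξ²)^{s−2} sin²(q₀ξ) dξ ≤ q₀^{3−2s}/(2s−1) and ∫_{1/q₀}^∞ (1+ξ²)^{s−2} sin²(q₀ξ) dξ ≤ q₀^{3−2s}/(3−2s). -/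
open MeasureTheory Real Set

/-!
Cut the integral at `ξ = 1/q₀` and bound `(1 + ξ²)^(s-2) ≤ ξ^(2s-4)`. Below the cut,
`sin²(q₀ξ) ≤ (q₀ξ)²` leaves `q₀² ξ^(2s-2)`, integrable at `0` since `s > 1/2`;
above it, `sin² ≤ 1` leaves `ξ^(2s-4)`, integrable at `∞` since `s < 3/2`.
Both power integrals evaluate to multiples of `q₀^(3-2s)`.
-/

section

variable {q r a : ℝ}

lemma one_add_sq_rpow_le {ξ : ℝ} (hξ : 0 < ξ) (hr : r ≤ 0) :
    (1 + ξ ^ 2) ^ r ≤ ξ ^ (2 * r) := by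
  rw [rpow_mul hξ.le, rpow_two]
  exact rpow_le_rpow_of_nonpos (by positivity) (le_add_of_nonneg_left zero_le_one) hr

lemma continuous_one_add_sq_rpow_mul_sin_sq (q r : ℝ) :
    Continuous fun ξ : ℝ => (1 + ξ ^ 2) ^ r * sin (q * ξ) ^ 2 := by
  refine Continuous.mul ?_ (by fun_prop)
  exact (by fun_prop : Continuous fun ξ : ℝ => 1 + ξ ^ 2).rpow_const
    fun ξ => Or.inl (by positivity)

lemma one_add_sq_rpow_mul_sin_sq_le_sq_mul_rpow {ξ : ℝ} (hξ : 0 < ξ) (hr : r ≤ 0) :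
    (1 + ξ ^ 2) ^ r * sin (q * ξ) ^ 2 ≤ q ^ 2 * ξ ^ (2 * r + 2) := by
  calc (1 + ξ ^ 2) ^ r * sin (q * ξ) ^ 2 ≤ ξ ^ (2 * r) * (q * ξ) ^ 2 :=
        mul_le_mul (one_add_sq_rpow_le hξ hr) sin_sq_le_sq (sq_nonneg _) (by positivity)
    _ = q ^ 2 * ξ ^ (2 * r + 2) := by
        rw [rpow_add hξ, rpow_two]
        ring

lemma one_add_sq_rpow_mul_sin_sq_le_rpow {ξ : ℝ} (hξ : 0 < ξ) (hr : r ≤ 0) :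
    (1 + ξ ^ 2) ^ r * sin (q * ξ) ^ 2 ≤ ξ ^ (2 * r) :=
  (mul_le_of_le_one_right (by positivity) (sin_sq_le_one _)).trans (one_add_sq_rpow_le hξ hr)

lemma integrableOn_Ioo_one_add_sq_rpow_mul_sin_sq (q r a : ℝ) :
    IntegrableOn (fun ξ : ℝ => (1 + ξ ^ 2) ^ r * sin (q * ξ) ^ 2) (Ioo 0 a) :=
  ((continuous_one_add_sq_rpow_mul_sin_sq q r).integrableOn_Icc).mono_set Ioo_subset_Icc_self

lemma integrableOn_Ioi_one_add_sq_rpow_mul_sin_sq (hr : r < -1 / 2) (ha : 0 < a) :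
    IntegrableOn (fun ξ : ℝ => (1 + ξ ^ 2) ^ r * sin (q * ξ) ^ 2) (Ioi a) := by
  refine (integrableOn_Ioi_rpow_of_lt (a := 2 * r) (by linarith) ha).mono'
    (continuous_one_add_sq_rpow_mul_sin_sq q r).aestronglyMeasurable.restrict ?_
  filter_upwards [ae_restrict_mem measurableSet_Ioi] with ξ hξ
  rw [norm_of_nonneg (by positivity)]
  exact one_add_sq_rpow_mul_sin_sq_le_rpow (ha.trans hξ) (by linarith)

lemma setIntegral_Ioo_one_add_sq_rpow_mul_sin_sq_le (ha : 0 < a) (hr₁ : -3 / 2 < r)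
    (hr₂ : r ≤ 0) :
    ∫ ξ in Ioo 0 a, (1 + ξ ^ 2) ^ r * sin (q * ξ) ^ 2 ≤
      q ^ 2 * (a ^ (2 * r + 3) / (2 * r + 3)) := by
  have hpow : IntegrableOn (fun ξ : ℝ => q ^ 2 * ξ ^ (2 * r + 2)) (Ioo 0 a) :=
    ((intervalIntegrable_iff_integrableOn_Ioo_of_le ha.le).mp
      (intervalIntegral.intervalIntegrable_rpow' (by linarith))).const_mul _
  calc ∫ ξ in Ioo 0 a, (1 + ξ ^ 2) ^ r * sin (q * ξ) ^ 2
      ≤ ∫ ξ in Ioo 0 a, q ^ 2 * ξ ^ (2 * r + 2) :=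
        setIntegral_mono_on (integrableOn_Ioo_one_add_sq_rpow_mul_sin_sq q r a) hpow
          measurableSet_Ioo fun ξ hξ => one_add_sq_rpow_mul_sin_sq_le_sq_mul_rpow hξ.1 hr₂
    _ = q ^ 2 * (a ^ (2 * r + 3) / (2 * r + 3)) := by
        rw [integral_const_mul, ← integral_Ioc_eq_integral_Ioo,
          ← intervalIntegral.integral_of_le ha.le, integral_rpow (Or.inl (by linarith)),
          zero_rpow (by linarith)]
        ring_nf

lemma setIntegral_Ioi_one_add_sq_rpow_mul_sin_sq_le (ha : 0 < a) (hr : r < -1 / 2) :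
    ∫ ξ in Ioi a, (1 + ξ ^ 2) ^ r * sin (q * ξ) ^ 2 ≤ -a ^ (2 * r + 1) / (2 * r + 1) := by
  calc ∫ ξ in Ioi a, (1 + ξ ^ 2) ^ r * sin (q * ξ) ^ 2 ≤ ∫ ξ in Ioi a, ξ ^ (2 * r) :=
        setIntegral_mono_on (integrableOn_Ioi_one_add_sq_rpow_mul_sin_sq hr ha)
          (integrableOn_Ioi_rpow_of_lt (by linarith) ha) measurableSet_Ioi
          fun ξ hξ => one_add_sq_rpow_mul_sin_sq_le_rpow (ha.trans hξ) (by linarith)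
    _ = -a ^ (2 * r + 1) / (2 * r + 1) := integral_Ioi_rpow_of_lt (by linarith) ha

lemma setIntegral_Ioi_eq_Ioo_add_Ioi {E : Type*} [NormedAddCommGroup E] [NormedSpace ℝ E]
    {f : ℝ → E} {b : ℝ} (hab : a ≤ b)
    (h₁ : IntegrableOn f (Ioo a b)) (h₂ : IntegrableOn f (Ioi b)) :
    ∫ x in Ioi a, f x = (∫ x in Ioo a b, f x) + ∫ x in Ioi b, f x := by
  rw [← Ioc_union_Ioi_eq_Ioi hab, setIntegral_union Ioc_disjoint_Ioi_same measurableSet_Ioi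
    ((integrableOn_Ioc_iff_integrableOn_Ioo).mpr h₁) h₂, integral_Ioc_eq_integral_Ioo]

end

/-- For `q₀ ∈ (0,1)` and `s ∈ (1/2, 3/2)`,
`∫_0^{1/q₀} (1+ξ²)^{s-2} sin²(q₀ξ) dξ ≤ q₀^{3-2s}/(2s-1)`,
`∫_{1/q₀}^∞ (1+ξ²)^{s-2} sin²(q₀ξ) dξ ≤ q₀^{3-2s}/(3-2s)`, and consequently
`∫_0^∞ (1+ξ²)^{s-2} sin²(q₀ξ) dξ ≤ (1/(2s-1) + 1/(3-2s)) q₀^{3-2s}`. -/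
theorem integral_upper_bound (q₀ s : ℝ) (hq₀ : q₀ ∈ Ioo (0 : ℝ) 1)
    (hs : s ∈ Ioo (1 / 2 : ℝ) (3 / 2)) :
    (∫ ξ in Ioo (0 : ℝ) (1 / q₀), (1 + ξ ^ 2) ^ (s - 2) * Real.sin (q₀ * ξ) ^ 2) ≤
        q₀ ^ (3 - 2 * s) / (2 * s - 1) ∧
      (∫ ξ in Ioi (1 / q₀), (1 + ξ ^ 2) ^ (s - 2) * Real.sin (q₀ * ξ) ^ 2) ≤
        q₀ ^ (3 - 2 * s) / (3 - 2 * s) ∧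
      (∫ ξ in Ioi (0 : ℝ), (1 + ξ ^ 2) ^ (s - 2) * Real.sin (q₀ * ξ) ^ 2) ≤
        (1 / (2 * s - 1) + 1 / (3 - 2 * s)) * q₀ ^ (3 - 2 * s) := by
  obtain ⟨hq, -⟩ := hq₀
  obtain ⟨hs₁, hs₂⟩ := hs
  have ha : 0 < 1 / q₀ := by positivity
  have hcut : ∀ x : ℝ, (1 / q₀) ^ x = q₀ ^ (-x) := fun x => by
    rw [one_div, inv_rpow hq.le, rpow_neg hq.le]
  have near : (∫ ξ in Ioo (0 : ℝ) (1 / q₀), (1 + ξ ^ 2) ^ (s - 2) * sin (q₀ * ξ) ^ 2) ≤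
      q₀ ^ (3 - 2 * s) / (2 * s - 1) := by
    refine (setIntegral_Ioo_one_add_sq_rpow_mul_sin_sq_le ha (by linarith)
      (by linarith)).trans_eq ?_
    rw [hcut, ← rpow_two, mul_div_assoc', ← rpow_add hq]
    ring_nf
  have far : (∫ ξ in Ioi (1 / q₀), (1 + ξ ^ 2) ^ (s - 2) * sin (q₀ * ξ) ^ 2) ≤
      q₀ ^ (3 - 2 * s) / (3 - 2 * s) := by
    refine (setIntegral_Ioi_one_add_sq_rpow_mul_sin_sq_le ha (by linarith)).trans_eq ?_
    rw [hcut, neg_div, ← div_neg]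
    ring_nf
  refine ⟨near, far, ?_⟩
  rw [setIntegral_Ioi_eq_Ioo_add_Ioi ha.le (integrableOn_Ioo_one_add_sq_rpow_mul_sin_sq _ _ _)
    (integrableOn_Ioi_one_add_sq_rpow_mul_sin_sq (by linarith) ha)]
  linarith [show (1 / (2 * s - 1) + 1 / (3 - 2 * s)) * q₀ ^ (3 - 2 * s) =
    q₀ ^ (3 - 2 * s) / (2 * s - 1) + q₀ ^ (3 - 2 * s) / (3 - 2 * s) by ring]
end

section
/- Let q₀ ∈ (0,1), p₀ > 0, u₀(x) = p₀(e^{-|x+q₀|} − e^{-|x−q₀|}), and T* := 1/(p₀(1 + e^{-2q₀})). Then for every t ∈ [0, T*) the map x ↦ x + t u₀(x) is a strictly increasing bijection from ℝ to ℝ. -/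
open Set Real

/-!
Write `u(x) = e^{-|x+q|} - e^{-|x-q|}` (so `u₀ = p₀ u`) and `L = 1 + e^{-2q} = 2 e^{-q} cosh q`.
The function `u + L x` is monotone: on `(-∞, -q]` and `[q, ∞)` the term `u` is `± 2 sinh q · e^{±x}`,
monotone by itself, while on `[-q, q]` we have `u + L x = 2 e^{-q} (x cosh q - sinh x)`, whose
derivative `2 e^{-q} (cosh q - cosh x)` is nonnegative there. Hence
`x + t p₀ u = (1 - t p₀ L) x + t p₀ (u + L x)` is strictly increasing as soon as `t p₀ L < 1`.
It is continuous and stays within `t p₀` of the identity, so it is also onto.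
-/

noncomputable def peakonAntipeakon (q x : ℝ) : ℝ := exp (-|x + q|) - exp (-|x - q|)

theorem peakonAntipeakon_of_le_neg {q x : ℝ} (hq : 0 ≤ q) (hx : x ≤ -q) :
    peakonAntipeakon q x = 2 * sinh q * exp x := by
  rw [peakonAntipeakon, abs_of_nonpos (by linarith), abs_of_nonpos (by linarith), neg_neg, neg_neg,
    sinh_eq, exp_add, exp_sub, exp_neg]
  field_simp

theorem peakonAntipeakon_of_mem_Icc {q x : ℝ} (hx : x ∈ Icc (-q) q) :
    peakonAntipeakon q x = -(2 * exp (-q) * sinh x) := by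
  rw [peakonAntipeakon, abs_of_nonneg (by linarith [hx.1]), abs_of_nonpos (by linarith [hx.2]),
    neg_neg, sinh_eq, neg_add', exp_sub, exp_sub, exp_neg, exp_neg]
  field_simp
  ring

theorem peakonAntipeakon_of_le {q x : ℝ} (hq : 0 ≤ q) (hx : q ≤ x) :
    peakonAntipeakon q x = -(2 * sinh q * exp (-x)) := by
  rw [peakonAntipeakon, abs_of_nonneg (by linarith), abs_of_nonneg (by linarith), neg_add',
    neg_sub', sinh_eq, exp_sub, exp_sub, exp_neg, exp_neg]
  field_simp
  ring

theorem one_add_exp_neg_two_mul (q : ℝ) : 1 + exp (-2 * q) = 2 * exp (-q) * cosh q := by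
  rw [cosh_eq, show -2 * q = -q + -q by ring, exp_add, exp_neg]
  field_simp

theorem abs_peakonAntipeakon_le_one (q x : ℝ) : |peakonAntipeakon q x| ≤ 1 :=
  abs_sub_le_of_nonneg_of_le (exp_pos _).le (exp_le_one_iff.2 (neg_nonpos.2 (abs_nonneg _)))
    (exp_pos _).le (exp_le_one_iff.2 (neg_nonpos.2 (abs_nonneg _)))

theorem monotoneOn_peakonAntipeakon_add_mul_Icc {q : ℝ} :
    MonotoneOn (fun x => peakonAntipeakon q x + (1 + exp (-2 * q)) * x) (Icc (-q) q) := by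
  have hderiv (x : ℝ) : HasDerivAt (fun x => 2 * exp (-q) * (x * cosh q - sinh x))
      (2 * exp (-q) * (cosh q - cosh x)) x := by
    simpa using
      (((hasDerivAt_id x).mul_const (cosh q)).sub (hasDerivAt_sinh x)).const_mul (2 * exp (-q))
  refine (monotoneOn_of_hasDerivWithinAt_nonneg (convex_Icc (-q) q) ?_
    (fun x _ => (hderiv x).hasDerivWithinAt) fun x hx => ?_).congr fun x hx => ?_
  · fun_prop
  · rw [interior_Icc] at hx
    have hcosh : cosh x ≤ cosh q := cosh_le_cosh.2 (abs_le_abs hx.2.le (by linarith [hx.1]))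
    exact mul_nonneg (by positivity) (sub_nonneg.2 hcosh)
  · simp only [peakonAntipeakon_of_mem_Icc hx, one_add_exp_neg_two_mul]
    ring

theorem monotone_peakonAntipeakon_add_mul {q : ℝ} (hq : 0 < q) :
    Monotone fun x => peakonAntipeakon q x + (1 + exp (-2 * q)) * x := by
  have hsinh : 0 < sinh q := sinh_pos_iff.2 hq
  have hleft : MonotoneOn (fun x => peakonAntipeakon q x + (1 + exp (-2 * q)) * x) (Iic (-q)) := by
    intro x hx y hy hxy
    simp only [peakonAntipeakon_of_le_neg hq.le hx, peakonAntipeakon_of_le_neg hq.le hy]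
    gcongr
  have hright : MonotoneOn (fun x => peakonAntipeakon q x + (1 + exp (-2 * q)) * x) (Ici q) := by
    intro x hx y hy hxy
    simp only [peakonAntipeakon_of_le hq.le hx, peakonAntipeakon_of_le hq.le hy]
    gcongr
  have hIic := hleft.union_right monotoneOn_peakonAntipeakon_add_mul_Icc isGreatest_Iic
    (isLeast_Icc (by linarith))
  rw [Iic_union_Icc_eq_Iic (by linarith)] at hIic
  exact hIic.Iic_union_Ici hright

theorem strictMono_add_mul_of_monotone_add_mul {u : ℝ → ℝ} {L t : ℝ} (ht : 0 ≤ t) (htL : t * L < 1)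
    (hu : Monotone fun x => u x + L * x) : StrictMono fun x => x + t * u x := by
  have hlin : StrictMono fun x : ℝ => (1 - t * L) * x := strictMono_mul_left_of_pos (by linarith)
  convert hlin.add_monotone (hu.const_mul ht) using 1
  funext x
  ring

theorem surjective_of_continuous_of_abs_sub_le {f : ℝ → ℝ} (hf : Continuous f) {C : ℝ}
    (hC : ∀ x, |f x - x| ≤ C) : Function.Surjective f :=
  hf.surjective
    (Filter.tendsto_atTop_mono (fun x => by linarith [id_eq x, (abs_le.1 (hC x)).1])
      (Filter.tendsto_atTop_add_const_right _ (-C) Filter.tendsto_id))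
    (Filter.tendsto_atBot_mono (fun x => by linarith [id_eq x, (abs_le.1 (hC x)).2])
      (Filter.tendsto_atBot_add_const_right _ C Filter.tendsto_id))

/-- For `q₀ ∈ (0,1)`, `p₀ > 0`, `u₀(x) = p₀(e^{-|x+q₀|} - e^{-|x-q₀|})` and
`T* = 1/(p₀(1 + e^{-2q₀}))`, for every `t ∈ [0,T*)` the map `x ↦ x + t u₀(x)` is a
strictly increasing bijection from `ℝ` to `ℝ`. -/
theorem flow_map_strictMono_bijective (q₀ p₀ : ℝ) (hq₀ : q₀ ∈ Ioo (0 : ℝ) 1) (hp₀ : 0 < p₀) :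
    ∀ t : ℝ, 0 ≤ t → t < 1 / (p₀ * (1 + Real.exp (-2 * q₀))) →
      StrictMono (fun x : ℝ => x + t * (p₀ * (Real.exp (-|x + q₀|) - Real.exp (-|x - q₀|)))) ∧
      Function.Bijective
        (fun x : ℝ => x + t * (p₀ * (Real.exp (-|x + q₀|) - Real.exp (-|x - q₀|)))) := by
  intro t ht htT
  have htL : t * (p₀ * (1 + exp (-2 * q₀))) < 1 := by
    rwa [lt_div_iff₀ (by positivity)] at htT
  have hmono : StrictMono fun x => x + t * (p₀ * peakonAntipeakon q₀ x) := by
    refine strictMono_add_mul_of_monotone_add_mul ht htL ?_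
    convert (monotone_peakonAntipeakon_add_mul hq₀.1).const_mul hp₀.le using 1
    funext x
    ring
  have hclose (x : ℝ) : |x + t * (p₀ * peakonAntipeakon q₀ x) - x| ≤ t * p₀ := by
    rw [add_sub_cancel_left, ← mul_assoc, abs_mul, abs_of_nonneg (by positivity)]
    exact mul_le_of_le_one_right (by positivity) (abs_peakonAntipeakon_le_one q₀ x)
  exact ⟨hmono, hmono.injective,
    surjective_of_continuous_of_abs_sub_le (by fun_prop) hclose⟩
end
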